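/- Let φ̄ be a smooth bounded function on a complete negatively curved manifold M (K_M ≤ -a², n-dimensional) satisfying |Δφ̄(x)| ≤ C₀ e^{-aρ(x)} for all x, where ρ is distance from a base point. Then for any 0 < δ < a and α = 2C₀ / (δ((n-1)a - δ)), the function φ̄ - α e^{-δρ} is subharmonic and φ̄ + α e^{-δρ} is superharmonic on the region where ρ is smooth. -/

import Mathlib

/-!
STATEMENT 9: Barrier functions.  Let φ̄ be a smooth bounded function on a
complete negatively curved n-manifold (K_M ≤ -a², so that Δρ ≥ (n-1)a and
Δ(e^{-δρ}) = δe^{-δρ}(δ - Δρ) on the region S where ρ is smooth) with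
|Δφ̄(x)| ≤ C₀ e^{-aρ(x)} for all x.  Then for 0 < δ < a and
α = 2C₀/(δ((n-1)a - δ)), the function φ̄ - αe^{-δρ} is subharmonic and
φ̄ + αe^{-δρ} is superharmonic on S.
-/
theorem barrier_sub_and_superharmonic
    {M : Type*} (n : ℕ) (hn : 2 ≤ n)
    (a δ C₀ α : ℝ) (ha : 0 < a) (hC₀ : 0 < C₀)
    (hδ0 : 0 < δ) (hδa : δ < a)
    (hα : α = 2 * C₀ / (δ * (((n : ℝ) - 1) * a - δ)))
    (ρ : M → ℝ) (hρ0 : ∀ x, 0 ≤ ρ x)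
    (Δ : (M → ℝ) →ₗ[ℝ] (M → ℝ))
    (φbar : M → ℝ) (hbounded : ∃ C, ∀ x, |φbar x| ≤ C)
    (hφ : ∀ x, |Δ φbar x| ≤ C₀ * Real.exp (-a * ρ x))
    (S : Set M)
    (hcomp : ∀ x ∈ S, ((n : ℝ) - 1) * a ≤ Δ ρ x)
    (hchain : ∀ x ∈ S,
      Δ (fun y => Real.exp (-δ * ρ y)) x
        = δ * Real.exp (-δ * ρ x) * (δ - Δ ρ x)) :
    ∀ x ∈ S,
      0 ≤ Δ (fun y => φbar y - α * Real.exp (-δ * ρ y)) x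
      ∧ Δ (fun y => φbar y + α * Real.exp (-δ * ρ y)) x ≤ 0 := by
  intro x hx
  set g : M → ℝ := fun y => Real.exp (-δ * ρ y) with hg
  have hsub : (fun y => φbar y - α * Real.exp (-δ * ρ y)) = φbar - α • g := rfl
  have hadd : (fun y => φbar y + α * Real.exp (-δ * ρ y)) = φbar + α • g := rfl
  have hE : (0:ℝ) < Real.exp (-δ * ρ x) := Real.exp_pos _
  have hΔg : Δ g x = δ * Real.exp (-δ * ρ x) * (δ - Δ ρ x) := hchain x hx
  have hna : (1:ℝ) ≤ (n:ℝ) - 1 := by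
    have : (2:ℝ) ≤ (n:ℝ) := by exact_mod_cast hn
    linarith
  have hden : 0 < δ * (((n : ℝ) - 1) * a - δ) := by
    have : δ < ((n:ℝ) - 1) * a := lt_of_lt_of_le hδa (by nlinarith)
    nlinarith
  have hαval : α * (δ * (((n : ℝ) - 1) * a - δ)) = 2 * C₀ := by
    rw [hα]; exact div_mul_cancel₀ _ hden.ne'
  have hexp : C₀ * Real.exp (-a * ρ x) ≤ C₀ * Real.exp (-δ * ρ x) := by
    apply mul_le_mul_of_nonneg_left _ hC₀.le
    apply Real.exp_le_exp.2
    nlinarith [hρ0 x]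
  have habs := hφ x
  have hupper : Δ φbar x ≤ C₀ * Real.exp (-δ * ρ x) :=
    le_trans (le_trans (le_abs_self _) habs) hexp
  have hlower : -(C₀ * Real.exp (-δ * ρ x)) ≤ Δ φbar x := by
    have := neg_abs_le (Δ φbar x)
    nlinarith [abs_nonneg (Δ φbar x)]
  have hΔρ := hcomp x hx
  have hkey : 2 * C₀ * Real.exp (-δ * ρ x) ≤ α * (δ * Real.exp (-δ * ρ x) * (Δ ρ x - δ)) := by
    have hαpos : 0 < α := by
      rw [hα]; positivity
    nlinarith [mul_pos (mul_pos hαpos hδ0) hE]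
  constructor
  · rw [hsub, map_sub, map_smul]
    simp only [Pi.sub_apply, Pi.smul_apply, smul_eq_mul, hΔg]
    nlinarith
  · rw [hadd, map_add, map_smul]
    simp only [Pi.add_apply, Pi.smul_apply, smul_eq_mul, hΔg]
    nlinarith
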